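/- arXiv:0905.0228 — 9 statements merged into one kernel-verified Lean document; each statement's English description precedes it below -/
import Mathlib

section
/- The matrices (c(i,j,q))_{0≤i,j≤n−1} and ((−1)^{(i−j)/2}·b(i,j,q))_{0≤i,j≤n−1} are mutually inverse, where c(n,k,q) are the coefficients of the new q-Hermite polynomials H_n(x,s|q) = Σ_k c(n,k,q)x^k(−s)^{(n−k)/2} and b(n,k,q) are the coefficients of the continuous q-Hermite polynomials Ĥ_n(x,s|q) = Σ_k b(n,k,q)x^k(−s)^{(n−k)/2}. -/
open Polynomial

noncomputable section

abbrev Kq : Type := RatFunc ℚ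
def q : Kq := RatFunc.X
abbrev Ks : Type := Polynomial Kq
abbrev Ax : Type := Polynomial Ks
def qInt (n : ℕ) : Kq := ∑ i ∈ Finset.range n, q ^ i
def sA : Ax := Polynomial.C Polynomial.X
def qDeriv (p : Ax) : Ax :=
  p.sum fun m a => Polynomial.C a * Polynomial.C (Polynomial.C (qInt m)) * X ^ (m - 1)

def sg : Ks →+* Ks := eval₂RingHom Polynomial.C (-Polynomial.X)
def Phi : Ax →+* Ax := Polynomial.mapRingHom sg

lemma sg_C (a : Kq) : sg (Polynomial.C a) = Polynomial.C a := eval₂_C _ _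
lemma sg_X : sg Polynomial.X = -Polynomial.X := eval₂_X _ _

lemma qDeriv_add (p r : Ax) : qDeriv (p + r) = qDeriv p + qDeriv r := by
  unfold qDeriv
  apply Polynomial.sum_add_index <;> intros <;> simp [add_mul]

lemma qDeriv_monomial (k : ℕ) (a : Ks) :
    qDeriv (monomial k a) = Polynomial.C a * Polynomial.C (Polynomial.C (qInt k)) * X ^ (k-1) := by
  unfold qDeriv
  rw [Polynomial.sum_monomial_index]
  simp

def Lmap (G : ℕ → Ax) : Ax →ₗ[Ks] Ax :=
  Polynomial.lsum (fun k => LinearMap.toSpanSingleton Ks Ax (G k))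

lemma Lmap_monomial (G : ℕ → Ax) (k : ℕ) (a : Ks) :
    Lmap G (monomial k a) = Polynomial.C a * G k := by
  rw [Lmap, Polynomial.lsum_apply, Polynomial.sum_monomial_index]
  · rw [LinearMap.toSpanSingleton_apply, Polynomial.smul_eq_C_mul]
  · simp

section Main
variable (Ht : ℕ → Ax) (c b : ℕ → ℕ → Kq)

def G (k : ℕ) : Ax := Phi (Ht k)

lemma G_zero (hH0 : Ht 0 = 1) : G Ht 0 = 1 := by rw [G, hH0, map_one]

lemma G_rec (hHrec : ∀ m : ℕ, Ht (m + 1) =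
      X * Ht m - Polynomial.C (Polynomial.C (qInt m) * Polynomial.X) * Ht (m - 1)) (m : ℕ) : G Ht (m+1) =
    X * G Ht m + Polynomial.C (Polynomial.C (qInt m) * Polynomial.X) * G Ht (m-1) := by
  rw [G, G, G, hHrec m]
  simp only [Phi, map_sub, map_mul, Polynomial.coe_mapRingHom, Polynomial.map_X,
    Polynomial.map_C, map_mul, sg_C, sg_X, map_neg]
  ring

lemma L_step (hHrec : ∀ m : ℕ, Ht (m + 1) =
      X * Ht m - Polynomial.C (Polynomial.C (qInt m) * Polynomial.X) * Ht (m - 1)) (p : Ax) :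
    Lmap (G Ht) (X * p - sA * qDeriv p) = X * Lmap (G Ht) p := by
  induction p using Polynomial.induction_on' with
  | add p r hp hr =>
      rw [qDeriv_add]
      have e : (X:Ax) * (p + r) - sA * (qDeriv p + qDeriv r)
          = (X * p - sA * qDeriv p) + (X * r - sA * qDeriv r) := by ring
      rw [mul_add] at e ⊢
      rw [e, map_add, hp, hr, map_add, mul_add]
  | monomial k a =>
      rw [qDeriv_monomial]
      have h1 : (X : Ax) * monomial k a = monomial (k+1) a := by
        rw [← Polynomial.C_mul_X_pow_eq_monomial, ← Polynomial.C_mul_X_pow_eq_monomial]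
        ring
      have h2 : sA * (Polynomial.C a * Polynomial.C (Polynomial.C (qInt k)) * X ^ (k-1))
          = monomial (k-1) (Polynomial.X * a * Polynomial.C (qInt k)) := by
        rw [← Polynomial.C_mul_X_pow_eq_monomial, sA]
        push_cast [map_mul]
        ring
      rw [h1, h2, map_sub, Lmap_monomial, Lmap_monomial, Lmap_monomial, G_rec Ht hHrec k]
      push_cast [map_mul]
      ring


lemma L_iterate (hH0 : Ht 0 = 1)
    (hHrec : ∀ m : ℕ, Ht (m + 1) =
      X * Ht m - Polynomial.C (Polynomial.C (qInt m) * Polynomial.X) * Ht (m - 1)) (m : ℕ) :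
    Lmap (G Ht) ((fun p : Ax => X * p - sA * qDeriv p)^[m] 1) = X ^ m := by
  induction m with
  | zero =>
      have h1 : (1 : Ax) = monomial 0 1 := (Polynomial.monomial_zero_one).symm
      rw [Function.iterate_zero_apply, h1, Lmap_monomial, G_zero Ht hH0, map_one, one_mul, pow_zero]
  | succ m ih =>
      rw [Function.iterate_succ_apply', L_step Ht hHrec, ih, pow_succ]
      ring

lemma G_expand (k : ℕ)
    (hb : Ht k =
      ∑ j ∈ Finset.range (k + 1),
        Polynomial.C (Polynomial.C (b k j) * (-Polynomial.X : Ks) ^ ((k - j) / 2)) * X ^ j) :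
    G Ht k = ∑ j ∈ Finset.range (k + 1),
        Polynomial.C (Polynomial.C (b k j) * (Polynomial.X : Ks) ^ ((k - j) / 2)) * X ^ j := by
  rw [G, hb, map_sum]
  refine Finset.sum_congr rfl fun j _ => ?_
  simp only [Phi, Polynomial.coe_mapRingHom, Polynomial.map_mul, Polynomial.map_C,
    Polynomial.map_pow, Polynomial.map_X, map_mul, map_pow, sg_C, map_neg, sg_X, neg_neg]


lemma E_identity (hH0 : Ht 0 = 1)
    (hHrec : ∀ m : ℕ, Ht (m + 1) =
      X * Ht m - Polynomial.C (Polynomial.C (qInt m) * Polynomial.X) * Ht (m - 1))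
    (hc : ∀ m : ℕ, (fun p : Ax => X * p - sA * qDeriv p)^[m] 1 =
      ∑ k ∈ Finset.range (m + 1),
        Polynomial.C (Polynomial.C (c m k) * (-Polynomial.X : Ks) ^ ((m - k) / 2)) * X ^ k)
    (m : ℕ) :
    ∑ k ∈ Finset.range (m+1),
      Polynomial.C (Polynomial.C (c m k) * (-Polynomial.X:Ks)^((m-k)/2)) * G Ht k
      = (X:Ax)^m := by
  rw [← L_iterate Ht hH0 hHrec m, hc m, map_sum]
  refine Finset.sum_congr rfl fun k _ => ?_
  rw [Polynomial.C_mul_X_pow_eq_monomial, Lmap_monomial]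

end Main

lemma coeff_expand (f : ℕ → Ks) (N j : ℕ) (hj : j < N) :
    (∑ k ∈ Finset.range N, Polynomial.C (f k) * (X:Ax)^k).coeff j = f j := by
  rw [Polynomial.finset_sum_coeff]
  simp only [Polynomial.coeff_C_mul, Polynomial.coeff_X_pow, mul_ite, mul_one, mul_zero]
  rw [Finset.sum_ite_eq, if_pos (Finset.mem_range.2 hj)]

theorem key_scalar (Ht : ℕ → Ax) (c b : ℕ → ℕ → Kq)
    (hH0 : Ht 0 = 1)
    (hHrec : ∀ m : ℕ, Ht (m + 1) =
      X * Ht m - Polynomial.C (Polynomial.C (qInt m) * Polynomial.X) * Ht (m - 1))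
    (hc : ∀ m : ℕ, (fun p : Ax => X * p - sA * qDeriv p)^[m] 1 =
      ∑ k ∈ Finset.range (m + 1),
        Polynomial.C (Polynomial.C (c m k) * (-Polynomial.X : Ks) ^ ((m - k) / 2)) * X ^ k)
    (hb : ∀ m : ℕ, Ht m =
      ∑ k ∈ Finset.range (m + 1),
        Polynomial.C (Polynomial.C (b m k) * (-Polynomial.X : Ks) ^ ((m - k) / 2)) * X ^ k)
    (hczero : ∀ i j : ℕ, (i + j) % 2 = 1 ∨ i < j → c i j = 0)
    (hbzero : ∀ i j : ℕ, (i + j) % 2 = 1 ∨ i < j → b i j = 0)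
    (m j : ℕ) (hjm : j ≤ m) :
    ∑ k ∈ Finset.range (m+1), (-1:Kq)^((m-k)/2) * (c m k * b k j)
      = if j = m then 1 else 0 := by
  have E := E_identity Ht c hH0 hHrec hc m
  have hGext : ∀ k ∈ Finset.range (m+1), G Ht k
      = ∑ j' ∈ Finset.range (m+1),
          Polynomial.C (Polynomial.C (b k j') * (Polynomial.X:Ks)^((k-j')/2)) * X^j' := by
    intro k hk
    rw [G_expand Ht b k (hb k)]
    apply Finset.sum_subset
    · exact Finset.range_subset_range.2 (by simp only [Finset.mem_range] at hk; omega)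
    · intro j' _ hj'
      have hb0 : b k j' = 0 := hbzero k j'
        (Or.inr (by simp only [Finset.mem_range, not_lt] at hj'; omega))
      simp [hb0]
  rw [Finset.sum_congr rfl (fun k hk => by rw [hGext k hk])] at E
  have E2 : ∑ j' ∈ Finset.range (m+1),
      Polynomial.C (∑ k ∈ Finset.range (m+1),
        (Polynomial.C (c m k) * (-Polynomial.X:Ks)^((m-k)/2))
          * (Polynomial.C (b k j') * (Polynomial.X:Ks)^((k-j')/2))) * (X:Ax)^j'
      = (X:Ax)^m := by
    rw [← E]
    calc ∑ j' ∈ Finset.range (m+1),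
          Polynomial.C (∑ k ∈ Finset.range (m+1),
            (Polynomial.C (c m k) * (-Polynomial.X:Ks)^((m-k)/2))
              * (Polynomial.C (b k j') * (Polynomial.X:Ks)^((k-j')/2))) * (X:Ax)^j'
        = ∑ j' ∈ Finset.range (m+1), ∑ k ∈ Finset.range (m+1),
            Polynomial.C ((Polynomial.C (c m k) * (-Polynomial.X:Ks)^((m-k)/2))
              * (Polynomial.C (b k j') * (Polynomial.X:Ks)^((k-j')/2))) * (X:Ax)^j' := by
          refine Finset.sum_congr rfl fun j' _ => ?_
          rw [map_sum, Finset.sum_mul]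
      _ = ∑ k ∈ Finset.range (m+1), ∑ j' ∈ Finset.range (m+1),
            Polynomial.C ((Polynomial.C (c m k) * (-Polynomial.X:Ks)^((m-k)/2))
              * (Polynomial.C (b k j') * (Polynomial.X:Ks)^((k-j')/2))) * (X:Ax)^j' :=
          Finset.sum_comm
      _ = ∑ k ∈ Finset.range (m+1),
            Polynomial.C (Polynomial.C (c m k) * (-Polynomial.X:Ks)^((m-k)/2))
              * ∑ j' ∈ Finset.range (m+1),
                  Polynomial.C (Polynomial.C (b k j') * (Polynomial.X:Ks)^((k-j')/2)) * X^j' := by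
          refine Finset.sum_congr rfl fun k _ => ?_
          rw [Finset.mul_sum]
          refine Finset.sum_congr rfl fun j' _ => ?_
          rw [map_mul]
          ring
  have E3 : (∑ k ∈ Finset.range (m+1),
      (Polynomial.C (c m k) * (-Polynomial.X:Ks)^((m-k)/2))
        * (Polynomial.C (b k j) * (Polynomial.X:Ks)^((k-j)/2)))
      = if j = m then (1:Ks) else 0 := by
    have h3 := congrArg (fun p : Ax => p.coeff j) E2
    simpa only [coeff_expand _ (m+1) j (by omega), Polynomial.coeff_X_pow] using h3
  have E4 : (∑ k ∈ Finset.range (m+1),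
      ((Polynomial.C (c m k) * (-Polynomial.X:Ks)^((m-k)/2))
        * (Polynomial.C (b k j) * (Polynomial.X:Ks)^((k-j)/2))).coeff ((m-j)/2))
      = (if j = m then (1:Ks) else 0).coeff ((m-j)/2) := by
    rw [← Polynomial.finset_sum_coeff, E3]
  calc ∑ k ∈ Finset.range (m+1), (-1:Kq)^((m-k)/2) * (c m k * b k j)
      = ∑ k ∈ Finset.range (m+1),
          ((Polynomial.C (c m k) * (-Polynomial.X:Ks)^((m-k)/2))
            * (Polynomial.C (b k j) * (Polynomial.X:Ks)^((k-j)/2))).coeff ((m-j)/2) := by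
        refine Finset.sum_congr rfl fun k hk => ?_
        simp only [Finset.mem_range] at hk
        have hrew : (Polynomial.C (c m k) * (-Polynomial.X:Ks)^((m-k)/2))
            * (Polynomial.C (b k j) * (Polynomial.X:Ks)^((k-j)/2))
            = Polynomial.C ((-1:Kq)^((m-k)/2) * (c m k * b k j))
                * (Polynomial.X:Ks)^((m-k)/2 + (k-j)/2) := by
          rw [neg_pow, ← Polynomial.C_1 (R := Kq), ← Polynomial.C_neg, ← Polynomial.C_pow,
            map_mul, map_mul, pow_add]
          ring
        rw [hrew, Polynomial.coeff_C_mul, Polynomial.coeff_X_pow]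
        by_cases h0 : c m k * b k j = 0
        · simp [h0]
        · obtain ⟨hc0, hb0⟩ := mul_ne_zero_iff.1 h0
          have hcp : ¬((m + k) % 2 = 1 ∨ m < k) := fun h => hc0 (hczero m k h)
          have hbp : ¬((k + j) % 2 = 1 ∨ k < j) := fun h => hb0 (hbzero k j h)
          push_neg at hcp hbp
          rw [if_pos (by omega), mul_one]
    _ = if j = m then 1 else 0 := by
        rw [E4]
        by_cases hjm' : j = m
        · subst hjm'
          simp
        · simp [hjm']


/-- Let `H_n(x,s|q) = (x − s·D_q)^n·1` with coefficient expansion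
`H_n = Σ_{k} c(n,k,q)·x^k·(−s)^{(n−k)/2}` and let `Ĥ_n` (here `Ht`) be the
continuous q-Hermite polynomials `Ĥ_0 = 1`, `Ĥ_{n+1} = x·Ĥ_n − s·[n]_q·Ĥ_{n−1}`
with expansion `Ĥ_n = Σ_k b(n,k,q)·x^k·(−s)^{(n−k)/2}` (with `c(i,j) = b(i,j) = 0`
whenever `j > i` or `i ≢ j (mod 2)`).  Then the matrices `(c(i,j,q))_{i,j<n}`
and `((−1)^{(i−j)/2}·b(i,j,q))_{i,j<n}` are mutually inverse. -/
theorem qHermite_coefficient_matrices_inverse (n : ℕ)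
    (Ht : ℕ → Ax) (c b : ℕ → ℕ → Kq)
    (hH0 : Ht 0 = 1)
    (hHrec : ∀ m : ℕ, Ht (m + 1) =
      X * Ht m - Polynomial.C (Polynomial.C (qInt m) * Polynomial.X) * Ht (m - 1))
    (hc : ∀ m : ℕ, (fun p : Ax => X * p - sA * qDeriv p)^[m] 1 =
      ∑ k ∈ Finset.range (m + 1),
        Polynomial.C (Polynomial.C (c m k) * (-Polynomial.X : Ks) ^ ((m - k) / 2)) * X ^ k)
    (hb : ∀ m : ℕ, Ht m =
      ∑ k ∈ Finset.range (m + 1),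
        Polynomial.C (Polynomial.C (b m k) * (-Polynomial.X : Ks) ^ ((m - k) / 2)) * X ^ k)
    (hczero : ∀ i j : ℕ, (i + j) % 2 = 1 ∨ i < j → c i j = 0)
    (hbzero : ∀ i j : ℕ, (i + j) % 2 = 1 ∨ i < j → b i j = 0) :
    (Matrix.of fun i j : Fin n => c i j) *
      (Matrix.of fun i j : Fin n => (-1 : Kq) ^ (((i : ℕ) - (j : ℕ)) / 2) * b i j) = 1 ∧
    (Matrix.of fun i j : Fin n => (-1 : Kq) ^ (((i : ℕ) - (j : ℕ)) / 2) * b i j) *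
      (Matrix.of fun i j : Fin n => c i j) = 1 := by
  have key := key_scalar Ht c b hH0 hHrec hc hb hczero hbzero
  have main : (Matrix.of fun i j : Fin n => c i j) *
      (Matrix.of fun i j : Fin n => (-1 : Kq) ^ (((i : ℕ) - (j : ℕ)) / 2) * b i j) = 1 := by
    ext i j
    rw [Matrix.mul_apply, Matrix.one_apply]
    simp only [Matrix.of_apply]
    rw [Fin.sum_univ_eq_sum_range
      (fun k => c (i:ℕ) k * ((-1:Kq) ^ ((k - (j:ℕ)) / 2) * b k (j:ℕ))) n]
    have hterm : ∀ k : ℕ, c (i:ℕ) k * ((-1:Kq) ^ ((k - (j:ℕ)) / 2) * b k (j:ℕ))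
        = (-1:Kq) ^ (((i:ℕ) - (j:ℕ)) / 2)
          * ((-1:Kq) ^ (((i:ℕ) - k) / 2) * (c (i:ℕ) k * b k (j:ℕ))) := by
      intro k
      by_cases hc0 : c (i:ℕ) k = 0
      · simp [hc0]
      by_cases hb0 : b k (j:ℕ) = 0
      · simp [hb0]
      have hcp : ¬(((i:ℕ) + k) % 2 = 1 ∨ (i:ℕ) < k) := fun h => hc0 (hczero _ k h)
      have hbp : ¬((k + (j:ℕ)) % 2 = 1 ∨ k < (j:ℕ)) := fun h => hb0 (hbzero k _ h)
      push_neg at hcp hbp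
      have he : ((i:ℕ) - (j:ℕ)) / 2 = ((i:ℕ) - k) / 2 + (k - (j:ℕ)) / 2 := by omega
      have hsq : (-1:Kq) ^ ((((i:ℕ) - k) / 2) * 2) = 1 := by
        rw [pow_mul', neg_one_sq, one_pow]
      rw [he, pow_add]
      linear_combination (-(c (i:ℕ) k * b k (j:ℕ) * (-1:Kq) ^ ((k - (j:ℕ)) / 2))) * hsq
    rw [Finset.sum_congr rfl fun k _ => hterm k, ← Finset.mul_sum]
    by_cases hji : (j:ℕ) ≤ (i:ℕ)
    · have hsub : ∑ k ∈ Finset.range n, (-1:Kq) ^ (((i:ℕ) - k) / 2) * (c (i:ℕ) k * b k (j:ℕ))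
          = ∑ k ∈ Finset.range ((i:ℕ)+1), (-1:Kq) ^ (((i:ℕ) - k) / 2) * (c (i:ℕ) k * b k (j:ℕ)) := by
        refine (Finset.sum_subset (Finset.range_subset_range.2 i.isLt) ?_).symm
        intro k _ hk
        simp only [Finset.mem_range, not_lt] at hk
        have : c (i:ℕ) k = 0 := hczero _ k (Or.inr (by omega))
        simp [this]
      rw [hsub, key (i:ℕ) (j:ℕ) hji]
      by_cases hij : (j:ℕ) = (i:ℕ)
      · have : i = j := Fin.ext hij.symm
        simp [this, hij]
      · have : ¬ i = j := fun h => hij (congrArg Fin.val h).symm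
        simp [this, hij]
    · have hz : ∑ k ∈ Finset.range n, (-1:Kq) ^ (((i:ℕ) - k) / 2) * (c (i:ℕ) k * b k (j:ℕ)) = 0 := by
        refine Finset.sum_eq_zero fun k _ => ?_
        rcases le_or_gt k (i:ℕ) with h | h
        · have : b k (j:ℕ) = 0 := hbzero k _ (Or.inr (by omega))
          simp [this]
        · have : c (i:ℕ) k = 0 := hczero _ k (Or.inr h)
          simp [this]
      have : ¬ i = j := fun h => hji (le_of_eq (congrArg Fin.val h.symm))
      rw [hz, mul_zero, if_neg this]
  exact ⟨main, mul_eq_one_comm.1 main⟩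

end
end

section
/- The operator substitution of x + s·D_q into the continuous q-Hermite polynomial reproduces powers: Ĥ_n(x + s·D_q, s|q)·1 = x^n for all n ≥ 0. -/
open Polynomial

noncomputable section

lemma qDeriv_X_pow (n : ℕ) :
    qDeriv (X ^ n : Ax) = Polynomial.C (Polynomial.C (qInt n)) * X ^ (n - 1) := by
  rw [qDeriv, ← Polynomial.monomial_one_right_eq_X_pow,
    Polynomial.sum_monomial_index]
  · simp
  · simp

/-- Let `T_n` be the operator substitution of `x + s·D_q` into the
continuous q-Hermite recurrence: `T_0 = id`, `T_1 = (x·) + s·D_q`,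
`T_{n+2} = ((x·) + s·D_q) ∘ T_{n+1} − s·[n+1]_q·T_n`.  Then
`Ĥ_n(x + s·D_q, s|q)·1 = T_n(1) = x^n` for all `n ≥ 0`. -/
theorem qHermite_operator_substitution (T : ℕ → Ax → Ax)
    (hT0 : ∀ p, T 0 p = p)
    (hT1 : ∀ p, T 1 p = X * p + sA * qDeriv p)
    (hTrec : ∀ (m : ℕ) (p : Ax),
      T (m + 2) p = X * T (m + 1) p + sA * qDeriv (T (m + 1) p) -
        Polynomial.C (Polynomial.C (qInt (m + 1)) * Polynomial.X) * T m p) :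
    ∀ n : ℕ, T n 1 = X ^ n := by
  intro n
  induction n using Nat.twoStepInduction with
  | zero => simp [hT0]
  | one =>
    have : qDeriv (1 : Ax) = 0 := by
      have h := qDeriv_X_pow 0
      simpa [qInt] using h
    simp [hT1, this]
  | more m ih1 ih2 =>
    rw [hTrec, ih1, ih2, qDeriv_X_pow]
    simp only [Nat.add_sub_cancel, sA, Polynomial.C_mul]
    ring
end
end

section
/- The rescaled discrete q-Hermite polynomials II, defined by h_{n+1}(x,s;q) = q^n·x·h_n(x,s;q) − [n]_q·s·h_{n−1}(x,s;q) with h_0 = 1, h_{−1} = 0, have the explicit formula h_n(x,s;q) = Σ_{k=0}^{⌊n/2⌋} q^{C(n−2k,2)}·qbinom(n,2k)·[2k−1]_q!!·(−s)^k·x^{n−2k}. -/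
open Polynomial

noncomputable section

/-- The q-factorial `[n]_q!`. -/
def qFact (n : ℕ) : Kq := ∏ i ∈ Finset.range n, qInt (i + 1)
/-- The Gaussian binomial coefficient. -/
def qChoose (n k : ℕ) : Kq := qFact n / (qFact k * qFact (n - k))
/-- The odd q-double factorial `[2k−1]_q!! = ∏_{i=1}^k [2i−1]_q`. -/
def qOddDFact (k : ℕ) : Kq := ∏ i ∈ Finset.range k, qInt (2 * i + 1)

/-! Both sides obey `h_{n+1} = q^n x h_n - [n]_q s h_{n-1}` from `h_0 = 1`, and such a recurrence
determines the sequence. For the explicit sum this is a coefficientwise identity which, after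
clearing the q-factorials, reduces to `[n+1]_q = [2k+2]_q + q^{2k+2} [n-2k-1]_q`. -/

theorem eq_of_two_term_recurrence {α : Type*} (F : ℕ → α → α → α) {f g : ℕ → α}
    (hf : ∀ n, f (n + 1) = F n (f n) (f (n - 1))) (hg : ∀ n, g (n + 1) = F n (g n) (g (n - 1)))
    (h0 : f 0 = g 0) : f = g := by
  suffices h : ∀ n, f n = g n ∧ f (n + 1) = g (n + 1) from funext fun n => (h n).1
  intro n
  induction n with
  | zero => exact ⟨h0, by rw [hf, hg, h0]⟩
  | succ n ih => exact ⟨ih.2, by rw [hf, hg, Nat.add_sub_cancel, ih.1, ih.2]⟩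

lemma qInt_zero : qInt 0 = 0 := Finset.sum_range_zero _

lemma qInt_add (a b : ℕ) : qInt (a + b) = qInt a + q ^ a * qInt b := by
  simp [qInt, Finset.sum_range_add, pow_add, Finset.mul_sum]

lemma qInt_succ_ne_zero (n : ℕ) : qInt (n + 1) ≠ 0 := by
  have hpoly : qInt (n + 1) =
      algebraMap ℚ[X] Kq (∑ i ∈ Finset.range (n + 1), (X : ℚ[X]) ^ i) := by
    simp [qInt, q, RatFunc.algebraMap_X]
  rw [hpoly]
  refine RatFunc.algebraMap_ne_zero fun hzero => ?_
  have := congrArg (eval 1) hzero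
  simp at this
  linarith [(n.cast_nonneg : (0 : ℚ) ≤ n)]

lemma qFact_ne_zero (n : ℕ) : qFact n ≠ 0 :=
  Finset.prod_ne_zero_iff.mpr fun i _ => qInt_succ_ne_zero i

lemma qFact_zero : qFact 0 = 1 := Finset.prod_range_zero _

lemma qFact_succ (n : ℕ) : qFact (n + 1) = qFact n * qInt (n + 1) := Finset.prod_range_succ _ _

lemma qOddDFact_succ (k : ℕ) : qOddDFact (k + 1) = qOddDFact k * qInt (2 * k + 1) :=
  Finset.prod_range_succ _ _

lemma qChoose_zero_right (n : ℕ) : qChoose n 0 = 1 := by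
  simp [qChoose, qFact_zero, qFact_ne_zero]

lemma qChoose_self (n : ℕ) : qChoose n n = 1 := by
  simp [qChoose, qFact_zero, qFact_ne_zero]

/-- Extended by `0` for `n < 2 * k` (where `qChoose n (2 * k)` is not `0`), so that sums of
`hermiteTerm n` may run over any range containing `0, …, n / 2`. -/
def hermiteCoeff (n k : ℕ) : Kq :=
  if 2 * k ≤ n then q ^ ((n - 2 * k).choose 2) * qChoose n (2 * k) * qOddDFact k else 0

lemma hermiteCoeff_of_le {n k : ℕ} (h : 2 * k ≤ n) :
    hermiteCoeff n k = q ^ ((n - 2 * k).choose 2) * qChoose n (2 * k) * qOddDFact k :=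
  if_pos h

lemma hermiteCoeff_of_lt {n k : ℕ} (h : n < 2 * k) : hermiteCoeff n k = 0 :=
  if_neg (by omega)

lemma hermiteCoeff_succ_zero (n : ℕ) : hermiteCoeff (n + 1) 0 = q ^ n * hermiteCoeff n 0 := by
  simp only [hermiteCoeff, mul_zero, zero_le, if_true, Nat.sub_zero, qChoose_zero_right,
    Nat.choose_succ_succ', Nat.choose_one_right, pow_add]
  ring

lemma hermiteCoeff_top (k : ℕ) :
    hermiteCoeff (2 * k + 2) (k + 1) = qInt (2 * k + 1) * hermiteCoeff (2 * k) k := by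
  rw [hermiteCoeff_of_le (by omega), hermiteCoeff_of_le le_rfl, Nat.sub_self,
    show 2 * k + 2 - 2 * (k + 1) = 0 by omega, show 2 * (k + 1) = 2 * k + 2 by ring,
    qChoose_self, qChoose_self, qOddDFact_succ]
  ring

lemma hermiteCoeff_two_mul_add (k m : ℕ) :
    hermiteCoeff (2 * k + m) k =
      q ^ m.choose 2 * (qFact (2 * k + m) / (qFact (2 * k) * qFact m)) * qOddDFact k := by
  rw [hermiteCoeff_of_le (by omega), qChoose, Nat.add_sub_cancel_left]

lemma hermiteCoeff_interior (m j : ℕ) :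
    hermiteCoeff (m + 2 * j + 3) (j + 1) =
      q ^ (m + 2 * j + 2) * hermiteCoeff (m + 2 * j + 2) (j + 1) +
        qInt (m + 2 * j + 2) * hermiteCoeff (m + 2 * j + 1) j := by
  have hsplit : qInt (2 * j + (m + 1) + 1 + 1) =
      qInt (2 * j + 1 + 1) + q ^ (2 * j + 1 + 1) * qInt (m + 1) := by
    rw [← qInt_add]; ring_nf
  set N := 2 * j + (m + 1)
  rw [show m + 2 * j + 3 = 2 * (j + 1) + (m + 1) by ring,
    show m + 2 * j + 2 = 2 * (j + 1) + m by ring, show m + 2 * j + 1 = N by ring,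
    hermiteCoeff_two_mul_add, hermiteCoeff_two_mul_add, hermiteCoeff_two_mul_add,
    show 2 * (j + 1) + (m + 1) = N + 1 + 1 by ring,
    show 2 * (j + 1) + m = N + 1 by ring, qFact_succ (N + 1), qFact_succ N,
    show 2 * (j + 1) = 2 * j + 1 + 1 by ring, qFact_succ (2 * j + 1), qFact_succ (2 * j),
    qFact_succ m, qOddDFact_succ, Nat.choose_succ_succ', Nat.choose_one_right, hsplit]
  field_simp [qFact_ne_zero, qInt_succ_ne_zero]
  ring

lemma hermiteCoeff_succ_succ (n k : ℕ) :
    hermiteCoeff (n + 1) (k + 1) =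
      q ^ n * hermiteCoeff n (k + 1) + qInt n * hermiteCoeff (n - 1) k := by
  rcases lt_trichotomy (2 * k + 1) n with hlt | rfl | hgt
  · obtain ⟨m, rfl⟩ : ∃ m, n = m + 2 * k + 2 := ⟨n - (2 * k + 2), by omega⟩
    exact hermiteCoeff_interior m k
  · rw [hermiteCoeff_of_lt (n := 2 * k + 1) (by omega), Nat.add_sub_cancel, mul_zero, zero_add]
    exact hermiteCoeff_top k
  · rw [hermiteCoeff_of_lt (by omega), hermiteCoeff_of_lt (by omega), mul_zero, zero_add]
    rcases n with _ | n
    · rw [qInt_zero, zero_mul]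
    · rw [hermiteCoeff_of_lt (by omega), mul_zero]

def hermiteTerm (n k : ℕ) : Ax := C (C (hermiteCoeff n k) * (-X : Ks) ^ k) * X ^ (n - 2 * k)

lemma hermiteTerm_succ_zero (n : ℕ) :
    hermiteTerm (n + 1) 0 = C (C (q ^ n)) * X * hermiteTerm n 0 := by
  simp only [hermiteTerm, hermiteCoeff_succ_zero, mul_zero, Nat.sub_zero, pow_succ, map_mul]
  ring

lemma hermiteTerm_succ_succ (n k : ℕ) :
    hermiteTerm (n + 1) (k + 1) = C (C (q ^ n)) * X * hermiteTerm n (k + 1) -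
      C (C (qInt n) * X) * hermiteTerm (n - 1) k := by
  rw [hermiteTerm, hermiteTerm, hermiteTerm, hermiteCoeff_succ_succ,
    show n - 1 - 2 * k = n + 1 - 2 * (k + 1) by omega]
  by_cases hk : 2 * (k + 1) ≤ n
  · rw [show n + 1 - 2 * (k + 1) = n - 2 * (k + 1) + 1 by omega]
    simp only [map_add, map_mul, map_pow, map_neg, pow_succ]
    ring
  · rw [hermiteCoeff_of_lt (by omega)]
    simp only [map_add, map_mul, map_pow, map_neg, map_zero, pow_succ]
    ring

def hermiteSum (n : ℕ) : Ax := ∑ k ∈ Finset.range (n / 2 + 1), hermiteTerm n k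

lemma sum_range_hermiteTerm {n N : ℕ} (h : n / 2 < N) :
    ∑ k ∈ Finset.range N, hermiteTerm n k = hermiteSum n := by
  refine (Finset.sum_subset (Finset.range_subset_range.2 (by omega)) fun k _ hk => ?_).symm
  rw [Finset.mem_range, not_lt] at hk
  rw [hermiteTerm, hermiteCoeff_of_lt (by omega), map_zero, zero_mul, map_zero, zero_mul]

lemma hermiteSum_zero : hermiteSum 0 = 1 := by
  simp [hermiteSum, hermiteTerm, hermiteCoeff, qChoose_self, qOddDFact]

lemma hermiteSum_succ (n : ℕ) :
    hermiteSum (n + 1) = C (C (q ^ n)) * X * hermiteSum n -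
      C (C (qInt n) * X) * hermiteSum (n - 1) := by
  rw [← sum_range_hermiteTerm (N := n + 2) (by omega),
    ← sum_range_hermiteTerm (n := n) (N := n + 2) (by omega),
    ← sum_range_hermiteTerm (n := n - 1) (N := n + 1) (by omega),
    Finset.sum_range_succ', Finset.sum_range_succ' _ (n + 1), mul_add, Finset.mul_sum, Finset.mul_sum]
  simp only [hermiteTerm_succ_succ, hermiteTerm_succ_zero, Finset.sum_sub_distrib]
  abel

/-- The rescaled discrete q-Hermite polynomials II, defined by
`h_0 = 1` and `h_{n+1} = q^n·x·h_n − [n]_q·s·h_{n−1}`, satisfy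
`h_n(x,s;q) = Σ_{k=0}^{⌊n/2⌋} q^{C(n−2k,2)}·qbinom(n,2k)·[2k−1]_q!!·(−s)^k·x^{n−2k}`. -/
theorem discrete_qHermite_explicit (h : ℕ → Ax)
    (h0 : h 0 = 1)
    (hrec : ∀ n : ℕ, h (n + 1) =
      Polynomial.C (Polynomial.C (q ^ n)) * X * h n -
        Polynomial.C (Polynomial.C (qInt n) * Polynomial.X) * h (n - 1)) :
    ∀ n : ℕ, h n = ∑ k ∈ Finset.range (n / 2 + 1),
      Polynomial.C (Polynomial.C (q ^ ((n - 2 * k).choose 2) * qChoose n (2 * k) * qOddDFact k) *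
        (-Polynomial.X : Ks) ^ k) * X ^ (n - 2 * k) := by
  have hsum : h = hermiteSum :=
    eq_of_two_term_recurrence (fun n a b => C (C (q ^ n)) * X * a - C (C (qInt n) * X) * b) hrec
      hermiteSum_succ (h0.trans hermiteSum_zero.symm)
  intro n
  rw [hsum, hermiteSum]
  refine Finset.sum_congr rfl fun k hk => ?_
  rw [hermiteTerm, hermiteCoeff_of_le (by rw [Finset.mem_range] at hk; omega)]

end
end

section
/- Let L_n(x) = h_n(x, (1−q)s; q) where h_n satisfies h_{n+1}(x,s;q) = q^n x h_n(x,s;q) − [n]_q s h_{n−1}(x,s;q). Then for all n ≥ 0: s·L_n(x) + x·L_{n+1}(x) = (x² + s)·L_n(qx). -/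
open Polynomial

noncomputable section

/-- Let `L_n(x) = h_n(x,(1−q)s;q)`, i.e. `L_0 = 1` and
`L_{n+1} = q^n·x·L_n − [n]_q·((1−q)s)·L_{n−1}` (the recurrence of
`h_n(x,s;q)` with `s` replaced by `(1−q)s`).  Then for all `n ≥ 0`:
`s·L_n(x) + x·L_{n+1}(x) = (x² + s)·L_n(qx)`. -/
theorem discrete_qHermite_basic_identity (L : ℕ → Ax)
    (h0 : L 0 = 1)
    (hrec : ∀ n : ℕ, L (n + 1) =
      Polynomial.C (Polynomial.C (q ^ n)) * X * L n -
        Polynomial.C (Polynomial.C (qInt n * (1 - q)) * Polynomial.X) * L (n - 1)) :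
    ∀ n : ℕ,
      sA * L n + X * L (n + 1) =
        (X ^ 2 + sA) * (L n).comp (Polynomial.C (Polynomial.C q) * X) := by
  have hq : ∀ m : ℕ, qInt m * (1 - q) = 1 - q ^ m := by
    intro m
    have h := geom_sum_mul q m
    unfold qInt
    linear_combination -h
  suffices h : ∀ n : ℕ,
      (sA * L n + X * L (n + 1) =
        (X ^ 2 + sA) * (L n).comp (Polynomial.C (Polynomial.C q) * X)) ∧
      (sA * L (n + 1) + X * L (n + 2) =
        (X ^ 2 + sA) * (L (n + 1)).comp (Polynomial.C (Polynomial.C q) * X)) by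
    exact fun n => (h n).1
  intro n
  induction n with
  | zero =>
    have h1 : L 1 = X := by
      have := hrec 0
      simp [qInt, h0] at this
      simpa using this
    have h2 := hrec 1
    simp only [h1, h0, Nat.sub_self] at h2
    constructor
    · simp only [h0, h1, hq, one_comp]
      ring
    · simp only [h1, h2, hq, X_comp, qInt]
      simp only [map_sub, map_one, map_pow, map_mul, Finset.range_one,
        Finset.sum_singleton, pow_zero, pow_one, sA]
      ring
  | succ n ih =>
    obtain ⟨ih1, ih2⟩ := ih
    refine ⟨ih2, ?_⟩
    have e1 := hrec (n + 1)
    have e2 := hrec (n + 2)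
    simp only [Nat.add_sub_cancel, show n + 2 - 1 = n + 1 from rfl] at e1 e2
    rw [e1] at ih2
    rw [e2, e1]
    simp only [mul_comp, sub_comp, C_comp, X_comp, hq]
    simp only [hq] at *
    simp only [map_sub, map_one, map_pow, map_mul, sA] at *
    linear_combination (Polynomial.C (Polynomial.C q)) ^ (n + 2) * X * ih2 -
      (1 - (Polynomial.C (Polynomial.C q)) ^ (n + 1)) * Polynomial.C Polynomial.X * ih1

end
end

section
/- The inversion formula for Lucas polynomials: x^n = Σ_{2k≤n} C(n,k)·s^k·l_{n−2k}(x,−s) for all n ≥ 0, where l_m are the Lucas polynomials with l_0 = 1. -/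
open Polynomial

private lemma pascal_term (lneg : ℕ → Polynomial (Polynomial ℤ)) (n k : ℕ)
    (hk : 2 * (k + 1) ≤ n + 1) :
    Polynomial.C (Polynomial.C (((n+1).choose (k+1) : ℤ)) * Polynomial.X ^ (k+1)) *
        lneg (n + 1 - 2 * (k+1)) =
      Polynomial.C (Polynomial.C ((n.choose (k+1) : ℤ)) * Polynomial.X ^ (k+1)) *
          lneg (n + 1 - 2 * (k+1)) +
        Polynomial.C (Polynomial.C ((n.choose k : ℤ)) * Polynomial.X ^ (k+1)) *
          lneg (n - 1 - 2 * k) := by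
  have h : n - 1 - 2 * k = n + 1 - 2 * (k + 1) := by omega
  rw [h, Nat.choose_succ_succ]
  push_cast
  rw [map_add, add_mul, map_add, add_mul]
  ring

private lemma key (lneg : ℕ → Polynomial (Polynomial ℤ))
    (h0 : lneg 0 = 1)
    (h1 : lneg 1 = X)
    (h2 : lneg 2 = X ^ 2 - 2 * Polynomial.C Polynomial.X)
    (hrec : ∀ n : ℕ, lneg (n + 3) = X * lneg (n + 2) - Polynomial.C Polynomial.X * lneg (n + 1))
    (n : ℕ) :
    X * ∑ k ∈ Finset.range (n / 2 + 1),
        Polynomial.C (Polynomial.C (n.choose k : ℤ) * Polynomial.X ^ k) * lneg (n - 2 * k) =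
      ∑ k ∈ Finset.range ((n + 1) / 2 + 1),
        Polynomial.C (Polynomial.C ((n + 1).choose k : ℤ) * Polynomial.X ^ k) *
          lneg (n + 1 - 2 * k) := by
  have mulgen : ∀ j : ℕ, 2 * j + 2 ≤ n →
      X * lneg (n - 2 * j) = lneg (n + 1 - 2 * j) + Polynomial.C Polynomial.X * lneg (n - 1 - 2 * j) := by
    intro j hj
    obtain ⟨m, hm⟩ : ∃ m, n - 2 * j = m + 2 := ⟨n - 2 * j - 2, by omega⟩
    have e1 : n + 1 - 2 * j = m + 3 := by omega
    have e2 : n - 1 - 2 * j = m + 1 := by omega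
    rw [hm, e1, e2, hrec]
    ring
  rw [Finset.mul_sum]
  rcases Nat.even_or_odd n with ⟨m, hm⟩ | ⟨m, hm⟩
  · -- n = 2m
    have hd1 : n / 2 = m := by omega
    have hd2 : (n + 1) / 2 = m := by omega
    rw [hd1, hd2]
    set A : ℕ → Polynomial (Polynomial ℤ) := fun k =>
      Polynomial.C (Polynomial.C ((n.choose k : ℤ)) * Polynomial.X ^ k) * lneg (n + 1 - 2 * k) with hA
    set B : ℕ → Polynomial (Polynomial ℤ) := fun k =>
      Polynomial.C (Polynomial.C ((n.choose k : ℤ)) * Polynomial.X ^ (k+1)) * lneg (n - 1 - 2 * k) with hB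
    have step1 : ∑ k ∈ Finset.range (m + 1),
        X * (Polynomial.C (Polynomial.C (n.choose k : ℤ) * Polynomial.X ^ k) * lneg (n - 2 * k))
        = (∑ k ∈ Finset.range m, (A k + B k)) + A m := by
      rw [Finset.sum_range_succ]
      congr 1
      · refine Finset.sum_congr rfl fun k hk => ?_
        rw [Finset.mem_range] at hk
        have h2k : 2 * k + 2 ≤ n := by omega
        rw [mul_left_comm, mulgen k h2k]
        simp only [hA, hB]
        simp only [Polynomial.C_mul, Polynomial.C_pow]
        ring
      · have hz : n - 2 * m = 0 := by omega
        have ho : n + 1 - 2 * m = 1 := by omega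
        simp only [hA]
        rw [hz, ho, h0, h1]
        ring
    rw [step1, Finset.sum_add_distrib]
    have rearr : (∑ k ∈ Finset.range m, A k + ∑ k ∈ Finset.range m, B k) + A m
        = (∑ k ∈ Finset.range (m+1), A k) + ∑ k ∈ Finset.range m, B k := by
      rw [Finset.sum_range_succ]; ring
    rw [rearr, Finset.sum_range_succ' A, Finset.sum_range_succ'
      (fun k => Polynomial.C (Polynomial.C (((n+1).choose k : ℤ)) * Polynomial.X ^ k) * lneg (n + 1 - 2 * k))]
    have hA0 : A 0 = Polynomial.C (Polynomial.C (((n+1).choose 0 : ℤ)) * Polynomial.X ^ 0) * lneg (n + 1 - 2 * 0) := by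
      simp [hA]
    rw [add_right_comm, hA0, ← Finset.sum_add_distrib]
    congr 1
    refine Finset.sum_congr rfl fun k hk => ?_
    rw [Finset.mem_range] at hk
    rw [← pascal_term lneg n k (by omega)]
  · -- n = 2m+1
    have hn : n = 2 * m + 1 := by omega
    have hd1 : n / 2 = m := by omega
    have hd2 : (n + 1) / 2 = m + 1 := by omega
    rw [hd1, hd2]
    set A : ℕ → Polynomial (Polynomial ℤ) := fun k =>
      Polynomial.C (Polynomial.C ((n.choose k : ℤ)) * Polynomial.X ^ k) * lneg (n + 1 - 2 * k) with hA
    set B : ℕ → Polynomial (Polynomial ℤ) := fun k =>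
      Polynomial.C (Polynomial.C ((n.choose k : ℤ)) * Polynomial.X ^ (k+1)) * lneg (n - 1 - 2 * k) with hB
    have hAB : A (m + 1) = B m := by
      simp only [hA, hB]
      have e1 : n + 1 - 2 * (m + 1) = 0 := by omega
      have e2 : n - 1 - 2 * m = 0 := by omega
      rw [e1, e2]
      have hcs : n.choose (m + 1) = n.choose m := by
        have h := Nat.choose_symm (n := n) (k := m + 1) (by omega)
        have h' : n - (m + 1) = m := by omega
        rw [h'] at h
        omega
      rw [hcs]
    have step1 : ∑ k ∈ Finset.range (m + 1),
        X * (Polynomial.C (Polynomial.C (n.choose k : ℤ) * Polynomial.X ^ k) * lneg (n - 2 * k))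
        = (∑ k ∈ Finset.range m, (A k + B k)) + (A m + 2 * B m) := by
      rw [Finset.sum_range_succ]
      congr 1
      · refine Finset.sum_congr rfl fun k hk => ?_
        rw [Finset.mem_range] at hk
        have h2k : 2 * k + 2 ≤ n := by omega
        rw [mul_left_comm, mulgen k h2k]
        simp only [hA, hB]
        simp only [Polynomial.C_mul, Polynomial.C_pow]
        ring
      · have hz : n - 2 * m = 1 := by omega
        have ho : n + 1 - 2 * m = 2 := by omega
        have he : n - 1 - 2 * m = 0 := by omega
        simp only [hA, hB]
        rw [hz, ho, he, h0, h1, h2]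
        simp only [Polynomial.C_mul, Polynomial.C_pow]
        ring
    rw [step1, Finset.sum_add_distrib]
    have rearr : (∑ k ∈ Finset.range m, A k + ∑ k ∈ Finset.range m, B k) + (A m + 2 * B m)
        = (∑ k ∈ Finset.range (m+2), A k) + ∑ k ∈ Finset.range (m+1), B k := by
      rw [Finset.sum_range_succ A (m+1), Finset.sum_range_succ A m, Finset.sum_range_succ B m, hAB]
      ring
    rw [rearr, Finset.sum_range_succ' A, Finset.sum_range_succ'
      (fun k => Polynomial.C (Polynomial.C (((n+1).choose k : ℤ)) * Polynomial.X ^ k) * lneg (n + 1 - 2 * k))]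
    have hA0 : A 0 = Polynomial.C (Polynomial.C (((n+1).choose 0 : ℤ)) * Polynomial.X ^ 0) * lneg (n + 1 - 2 * 0) := by
      simp [hA]
    rw [add_right_comm, hA0, ← Finset.sum_add_distrib]
    congr 1
    refine Finset.sum_congr rfl fun k hk => ?_
    rw [Finset.mem_range] at hk
    rw [← pascal_term lneg n k (by omega)]


/-- Inversion formula for Lucas polynomials, in `ℤ[s][x]`:
`x^n = Σ_{2k≤n} C(n,k)·s^k·l_{n−2k}(x,−s)`.  Here `lneg m = l_m(x,−s)` are the
Lucas polynomials evaluated at `(x,−s)`: `lneg 0 = 1`, `lneg 1 = x`,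
`lneg 2 = x² − 2s`, `lneg m = x·lneg_{m−1} − s·lneg_{m−2}` for `m ≥ 3`. -/
theorem lucas_inversion (lneg : ℕ → Polynomial (Polynomial ℤ))
    (h0 : lneg 0 = 1)
    (h1 : lneg 1 = X)
    (h2 : lneg 2 = X ^ 2 - 2 * Polynomial.C Polynomial.X)
    (hrec : ∀ n : ℕ, lneg (n + 3) = X * lneg (n + 2) - Polynomial.C Polynomial.X * lneg (n + 1)) :
    ∀ n : ℕ,
      (X : Polynomial (Polynomial ℤ)) ^ n =
        ∑ k ∈ Finset.range (n / 2 + 1),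
          Polynomial.C (Polynomial.C (n.choose k : ℤ) * Polynomial.X ^ k) * lneg (n - 2 * k) := by
  intro n
  induction n with
  | zero => simp [h0]
  | succ n ih =>
    rw [pow_succ, mul_comm, ih, key lneg h0 h1 h2 hrec n]
end

section
/- The q-Fibonacci polynomials, defined by F_n(x,s) = f_n(x + (q−1)s·D_q, s)·1 via operator substitution into the Fibonacci recurrence, have the explicit formula F_n(x,s) = Σ_{k=0}^{⌊(n−1)/2⌋} q^{C(k+1,2)}·qbinom(n−1−k, k)·s^k·x^{n−1−2k} for n ≥ 1, with F_0 = 0. -/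
/-!
Compare coefficients of `s^k x^j`. As `x + (q-1)s D_q` sends `s^k x^j` to
`s^k x^(j+1) + (q^j - 1) s^(k+1) x^(j-1)`, the recurrence for `F_n` becomes a three-term
recurrence for the coefficient `qFibCoeff n j k` of `s^k x^j` in `F_n`, which is supported on
`j + 2k + 1 = n`. The claimed value `q^C(k+1,2) [j+k choose k]_q` satisfies it by the identity
`qChoose_qFib_recurrence`, checked by clearing q-factorials. Indexing by the exponents `(j, k)`
rather than by `n` keeps every Gaussian binomial in its range `k ≤ j + k` (outside it `qChoose`
takes junk values) and avoids any parity split.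
-/

open Polynomial

noncomputable section

lemma sub_one_mul_qInt (n : ℕ) : (q - 1) * qInt n = q ^ n - 1 := by
  rw [qInt, mul_comm, geom_sum_mul]

lemma q_pow_ne_one {n : ℕ} (hn : n ≠ 0) : q ^ n ≠ 1 := by
  intro h
  have hX : (Polynomial.X : ℚ[X]) ^ n = 1 :=
    RatFunc.algebraMap_injective ℚ (by simpa [q, RatFunc.algebraMap_X] using h)
  simpa [hn] using congrArg natDegree hX

lemma qInt_ne_zero {n : ℕ} (hn : n ≠ 0) : qInt n ≠ 0 := fun h =>
  q_pow_ne_one hn (sub_eq_zero.mp (by rw [← sub_one_mul_qInt, h, mul_zero]))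

lemma qChoose_add_eq_qFact_div (a b : ℕ) :
    qChoose (a + b) a = qFact (a + b) / (qFact a * qFact b) := by
  rw [qChoose, Nat.add_sub_cancel_left]

lemma qChoose_succ_self (n : ℕ) : qChoose (n + 1) n = qInt (n + 1) := by
  have hInt_one : qInt 1 = 1 := by simp [qInt]
  rw [qChoose_add_eq_qFact_div, qFact_succ, qFact_succ 0, qFact_zero, zero_add, hInt_one, one_mul,
    mul_one, mul_div_cancel_left₀ _ (qFact_ne_zero n)]

lemma qChoose_qFib_recurrence (j k : ℕ) :
    q ^ (k + 1) * qChoose (j + 1 + (k + 1)) (k + 1) =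
      q ^ (k + 1) * qChoose (j + (k + 1)) (k + 1) +
        (q - 1) * qInt (j + 2) * qChoose (j + 2 + k) k + qChoose (j + 1 + k) k := by
  rw [Nat.add_comm (j + 1) (k + 1), qChoose_add_eq_qFact_div, Nat.add_comm j (k + 1),
    qChoose_add_eq_qFact_div, Nat.add_comm (j + 2) k, qChoose_add_eq_qFact_div,
    Nat.add_comm (j + 1) k, qChoose_add_eq_qFact_div,
    show k + 1 + (j + 1) = k + (j + 1) + 1 by ring, show k + (j + 2) = k + (j + 1) + 1 by ring,
    show k + 1 + j = k + (j + 1) by ring,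
    qFact_succ (k + (j + 1)), qFact_succ k, qFact_succ (j + 1), qFact_succ j]
  field_simp [qFact_ne_zero, qInt_ne_zero (Nat.succ_ne_zero j),
    qInt_ne_zero (Nat.succ_ne_zero (j + 1)), qInt_ne_zero (Nat.succ_ne_zero k)]
  have hsum := qInt_add (k + 1) (j + 1)
  rw [show k + 1 + (j + 1) = k + (j + 1) + 1 by ring] at hsum
  linear_combination hsum - qInt (k + (j + 1) + 1) * sub_one_mul_qInt (k + 1)

lemma coeff_qDeriv (p : Ax) (j : ℕ) :
    (qDeriv p).coeff j = C (qInt (j + 1)) * p.coeff (j + 1) := by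
  rw [qDeriv, Polynomial.sum_def, Polynomial.finsetSum_coeff, Finset.sum_eq_single (j + 1)]
  · rw [← C_mul, coeff_C_mul_X_pow, Nat.add_sub_cancel, if_pos rfl, mul_comm]
  · intro m _ hm
    rw [← C_mul, coeff_C_mul_X_pow]
    rcases m with _ | m
    · simp [qInt]
    · rw [if_neg (by omega)]
  · intro h
    rw [notMem_support_iff.mp h]
    simp

lemma qFib_step_eq (p r : Ax) : X * p + C ((C q - 1) * X) * qDeriv p + C X * r =
    X * p + C X * (C (C (q - 1)) * qDeriv p + r) := by
  simp only [map_mul, map_sub, map_one]; ring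

lemma pow_choose_two_succ {M : Type*} [Monoid M] (x : M) (k : ℕ) :
    x ^ (k + 1).choose 2 = x ^ k.choose 2 * x ^ k := by
  rw [Nat.choose_succ_succ', Nat.choose_one_right, add_comm, pow_add]

def qFibCoeff (n j k : ℕ) : Kq :=
  if j + 2 * k + 1 = n then q ^ (k + 1).choose 2 * qChoose (j + k) k else 0

lemma qFibCoeff_succ_zero (n j : ℕ) : qFibCoeff (n + 2) (j + 1) 0 = qFibCoeff (n + 1) j 0 := by
  simp [qFibCoeff, qChoose_zero_right]

lemma qFibCoeff_zero_succ (n k : ℕ) :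
    qFibCoeff (n + 2) 0 (k + 1) = (q - 1) * qFibCoeff (n + 1) 1 k + qFibCoeff n 0 k := by
  simp only [qFibCoeff]
  split_ifs <;> try omega
  · rw [zero_add, qChoose_self, add_comm 1, qChoose_succ_self, zero_add, qChoose_self,
      pow_choose_two_succ q (k + 1)]
    linear_combination -q ^ (k + 1).choose 2 * sub_one_mul_qInt (k + 1)
  · simp

lemma qFibCoeff_succ_succ (n j k : ℕ) :
    qFibCoeff (n + 2) (j + 1) (k + 1) = qFibCoeff (n + 1) j (k + 1) +
      ((q - 1) * (qInt (j + 2) * qFibCoeff (n + 1) (j + 2) k) + qFibCoeff n (j + 1) k) := by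
  simp only [qFibCoeff]
  split_ifs <;> try omega
  · rw [pow_choose_two_succ q (k + 1)]
    linear_combination q ^ (k + 1).choose 2 * qChoose_qFib_recurrence j k
  · simp

theorem coeff_coeff_eq_qFibCoeff (F : ℕ → Ax) (h0 : F 0 = 0) (h1 : F 1 = 1)
    (hrec : ∀ n : ℕ, F (n + 2) =
      X * F (n + 1) + C ((C q - 1) * X) * qDeriv (F (n + 1)) + C X * F n)
    (n j k : ℕ) : ((F n).coeff j).coeff k = qFibCoeff n j k := by
  induction n using Nat.twoStepInduction generalizing j k with
  | zero => simp [h0, qFibCoeff]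
  | one =>
    rw [h1, qFibCoeff]
    rcases j with _ | j <;> rcases k with _ | k <;> simp [qChoose_zero_right, coeff_one]
  | more n ih0 ih1 =>
    rw [hrec, qFib_step_eq]
    rcases j with _ | j <;> rcases k with _ | k <;>
      simp only [coeff_add, coeff_X_mul, coeff_C_mul, coeff_qDeriv, coeff_X_mul_zero, ih0, ih1]
    · simp [qFibCoeff]
    · simp [qFibCoeff_zero_succ, qInt]
    · simp [qFibCoeff_succ_zero]
    · exact (qFibCoeff_succ_succ n j k).symm

lemma coeff_coeff_sum_C_mul_X_pow {R : Type*} [Semiring R] (s : Finset ℕ) (c : ℕ → R)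
    (e : ℕ → ℕ) (j i : ℕ) :
    ((∑ k ∈ s, C (C (c k) * X ^ k) * X ^ e k : R[X][X]).coeff j).coeff i =
      if i ∈ s ∧ e i = j then c i else 0 := by
  simp only [finsetSum_coeff, coeff_C_mul_X_pow, apply_ite (coeff · i), coeff_zero]
  simp_rw [← ite_and, and_comm (a := j = _), ite_and, Finset.sum_ite_eq, ← ite_and, eq_comm]

/-- The q-Fibonacci polynomials
`F_n(x,s) = f_n(x + (q−1)s·D_q, s)·1`, i.e. `F_0 = 0`, `F_1 = 1`,
`F_{n+2} = (x + (q−1)s·D_q)(F_{n+1}) + s·F_n`, satisfy for `n ≥ 1`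
`F_n(x,s) = Σ_{k=0}^{⌊(n−1)/2⌋} q^{C(k+1,2)}·qbinom(n−1−k,k)·s^k·x^{n−1−2k}`. -/
theorem qFibonacci_explicit (F : ℕ → Ax)
    (h0 : F 0 = 0)
    (h1 : F 1 = 1)
    (hrec : ∀ n : ℕ, F (n + 2) =
      X * F (n + 1) +
        Polynomial.C ((Polynomial.C q - 1) * Polynomial.X) * qDeriv (F (n + 1)) +
        Polynomial.C Polynomial.X * F n) :
    ∀ n : ℕ, 1 ≤ n →
      F n = ∑ k ∈ Finset.range ((n - 1) / 2 + 1),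
        Polynomial.C (Polynomial.C (q ^ ((k + 1).choose 2) * qChoose (n - 1 - k) k) *
          Polynomial.X ^ k) * X ^ (n - 1 - 2 * k) := by
  intro n hn
  ext j i
  rw [coeff_coeff_eq_qFibCoeff F h0 h1 hrec, coeff_coeff_sum_C_mul_X_pow, qFibCoeff]
  simp only [Finset.mem_range]
  by_cases h : j + 2 * i + 1 = n
  · rw [if_pos h, if_pos ⟨by omega, by omega⟩, show n - 1 - i = j + i by omega]
  · rw [if_neg h, if_neg (by omega)]

end
end

section
/- The q-Hermite polynomials expand in q-Lucas polynomials: H_n(x, (q−1)s | q) = Σ_{k=0}^{⌊n/2⌋} C(n,k)·s^k·L_{n−2k}(x,−s), where H_n(x,s|q) = (x − s·D_q)^n·1 and L_m are the q-Lucas polynomials L_m(x,−s) = l_m(x − (q−1)s·D_q, −s)·1. -/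
/-!
Write `t = a + b` and `s = a b`, so that the Lucas polynomials are `l_m = a^m + b^m` for `m ≥ 1`
while `2 l_0 = a^0 + b^0`. Expanding `2 t^n = (a + b)^n + (b + a)^n` binomially and grouping
`a^i b^j + a^j b^i = s^{min(i,j)} (a^{|i-j|} + b^{|i-j|})` gives `2 t^n` as twice the claimed sum.
The only input is that `T = t` acts on these symmetric monomials as multiplication by `a + b`
does, which is exactly the Lucas recurrence together with the commutation of `T` with `s`.
-/

open Polynomial

noncomputable section

def opT (p : Ax) : Ax :=
  X * p - Polynomial.C ((Polynomial.C q - 1) * Polynomial.X) * qDeriv p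

open Finset

theorem iterate_map_eq_sum_antidiagonal_choose_nsmul {M F : Type*} [AddCommMonoid M]
    [FunLike F M M] [AddMonoidHomClass F M M] (T : F) (f : ℕ → ℕ → M)
    (hT : ∀ i j, T (f i j) = f (i + 1) j + f i (j + 1)) (n : ℕ) :
    T^[n] (f 0 0) = ∑ ij ∈ antidiagonal n, n.choose ij.1 • f ij.1 ij.2 := by
  induction n with
  | zero => simp
  | succ n ih =>
    rw [sum_antidiagonal_choose_succ_nsmul f n, Function.iterate_succ_apply', ih]
    simp only [map_sum, map_nsmul, hT, smul_add, sum_add_distrib]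
    rw [add_comm]
    congr 1
    refine sum_congr rfl fun ⟨i, j⟩ hij ↦ ?_
    rw [n.choose_symm_of_eq_add (mem_antidiagonal.1 hij).symm]

theorem Finset.Nat.sum_antidiagonal_choose_nsmul_add_swap {M : Type*} [AddCommMonoid M]
    (f : ℕ → ℕ → M) (n : ℕ) :
    ∑ ij ∈ antidiagonal n, n.choose ij.1 • (f ij.1 ij.2 + f ij.2 ij.1) =
      2 • ∑ ij ∈ antidiagonal n, n.choose ij.1 • f ij.1 ij.2 := by
  simp only [smul_add, sum_add_distrib, two_nsmul]
  congr 1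
  rw [← Nat.sum_antidiagonal_swap]
  refine sum_congr rfl fun ⟨i, j⟩ hij ↦ ?_
  rw [Prod.fst_swap, Prod.snd_swap, n.choose_symm_of_eq_add (mem_antidiagonal.1 hij).symm]

section Lucas

variable {R M : Type*} [CommSemiring R] [AddCommMonoid M] [Module R M] (s : R) (L : ℕ → M)

def lucasHalf (i j : ℕ) : M := if i ≤ j then s ^ i • L (j - i) else 0

/-- The image of `a^i b^j + a^j b^i` when `s = a b` and `L m` plays the role of `a^m + b^m`. -/
def lucasPair (i j : ℕ) : M := lucasHalf s L i j + lucasHalf s L j i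

theorem lucasPair_comm (i j : ℕ) : lucasPair s L i j = lucasPair s L j i := add_comm _ _

theorem lucasPair_self (i : ℕ) : lucasPair s L i i = 2 • s ^ i • L 0 := by
  simp [lucasPair, lucasHalf, two_nsmul]

theorem lucasPair_add (i d : ℕ) (hd : d ≠ 0) : lucasPair s L i (i + d) = s ^ i • L d := by
  simp [lucasPair, lucasHalf, hd]

theorem map_lucasPair (T : M →ₗ[R] M) (h0 : T (L 0) = L 1) (h1 : T (L 1) = L 2 + 2 • s • L 0)
    (h : ∀ n, T (L (n + 2)) = L (n + 3) + s • L (n + 1)) (i j : ℕ) :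
    T (lucasPair s L i j) = lucasPair s L (i + 1) j + lucasPair s L i (j + 1) := by
  wlog hij : i ≤ j generalizing i j
  · rw [lucasPair_comm, this j i (by omega), lucasPair_comm s L j, add_comm,
      lucasPair_comm s L (j + 1)]
  obtain ⟨d, rfl⟩ := Nat.exists_eq_add_of_le hij
  rcases d with _ | _ | d
  · rw [add_zero, lucasPair_self, map_nsmul, map_smul, h0, lucasPair_comm, two_nsmul,
      lucasPair_add _ _ _ 1 one_ne_zero]
  · rw [zero_add, lucasPair_add _ _ _ _ one_ne_zero, map_smul, h1, lucasPair_self, add_assoc,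
      lucasPair_add _ _ _ 2 two_ne_zero, smul_add, add_comm, smul_comm, pow_succ, mul_smul]
  · rw [lucasPair_add _ _ _ (d + 2) (by omega), map_smul, h,
      show i + (d + 1 + 1) + 1 = i + (d + 3) by omega, lucasPair_add _ _ _ (d + 3) (by omega),
      show i + (d + 1 + 1) = i + 1 + (d + 1) by omega, lucasPair_add _ _ _ (d + 1) (by omega),
      smul_add, add_comm, pow_succ, mul_smul, smul_comm]

theorem sum_antidiagonal_choose_nsmul_lucasHalf (n : ℕ) :
    ∑ ij ∈ antidiagonal n, n.choose ij.1 • lucasHalf s L ij.1 ij.2 =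
      ∑ k ∈ range (n / 2 + 1), n.choose k • s ^ k • L (n - 2 * k) := by
  rw [Nat.sum_antidiagonal_eq_sum_range_succ_mk]
  simp only [lucasHalf, smul_ite, smul_zero]
  rw [← sum_filter]
  refine sum_congr ?_ fun k hk ↦ ?_
  · ext k
    simp only [mem_filter, mem_range]
    omega
  · rw [mem_range] at hk
    rw [show n - k - k = n - 2 * k by omega]

theorem iterate_eq_sum_choose_nsmul_lucas [IsAddTorsionFree M] (T : M →ₗ[R] M)
    (h0 : T (L 0) = L 1) (h1 : T (L 1) = L 2 + 2 • s • L 0)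
    (h : ∀ n, T (L (n + 2)) = L (n + 3) + s • L (n + 1)) (n : ℕ) :
    T^[n] (L 0) = ∑ k ∈ range (n / 2 + 1), n.choose k • s ^ k • L (n - 2 * k) := by
  refine nsmul_right_injective two_ne_zero ?_
  have hstart : lucasPair s L 0 0 = 2 • L 0 := by rw [lucasPair_self, pow_zero, one_smul]
  dsimp only
  rw [← iterate_map_nsmul, ← hstart,
    iterate_map_eq_sum_antidiagonal_choose_nsmul T (lucasPair s L) (map_lucasPair s L T h0 h1 h)]
  simp only [lucasPair, Nat.sum_antidiagonal_choose_nsmul_add_swap,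
    sum_antidiagonal_choose_nsmul_lucasHalf]

end Lucas

def qDerivₗ : Ax →ₗ[Ks] Ax :=
  Polynomial.lsum fun m ↦ LinearMap.toSpanSingleton Ks Ax (C (C (qInt m)) * X ^ (m - 1))

theorem qDerivₗ_apply (p : Ax) : qDerivₗ p = qDeriv p := by
  simp [qDerivₗ, qDeriv, Polynomial.smul_eq_C_mul, mul_assoc]

def opTₗ : Ax →ₗ[Ks] Ax := LinearMap.mulLeft Ks X - ((C q - 1) * Polynomial.X) • qDerivₗ

theorem opTₗ_apply (p : Ax) : opTₗ p = opT p := by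
  simp [opTₗ, opT, qDerivₗ_apply, Polynomial.smul_eq_C_mul]

/-- `H_n(x,(q−1)s|q) = Σ_{k=0}^{⌊n/2⌋} C(n,k)·s^k·L_{n−2k}(x,−s)`,
where `H_n(x,(q−1)s|q) = (x − (q−1)s·D_q)^n·1` and `L_m(x,−s)` is obtained by
substituting `t = (x·) − (q−1)s·D_q`, `u = −s` into the Lucas polynomial `l_m`
(`l_0 = 1`, `l_1 = t`, `l_2 = t² + 2u`, `l_m = t·l_{m−1} + u·l_{m−2}` for `m ≥ 3`)
and applying to the constant `1`. -/
theorem qHermite_qLucas_expansion (L : ℕ → Ax)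
    (h0 : L 0 = 1)
    (h1 : L 1 = opT 1)
    (h2 : L 2 = opT (opT 1) + 2 * (-sA))
    (hrec : ∀ n : ℕ, L (n + 3) = opT (L (n + 2)) + (-sA) * L (n + 1)) :
    ∀ n : ℕ,
      (fun p : Ax => opT p)^[n] 1 =
        ∑ k ∈ Finset.range (n / 2 + 1),
          (n.choose k : Ax) * sA ^ k * L (n - 2 * k) := by
  have hsA : ∀ (k : ℕ) (p : Ax), sA ^ k * p = (Polynomial.X : Ks) ^ k • p := fun k p ↦ by
    rw [sA, ← map_pow, Polynomial.smul_eq_C_mul]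
  have hT : ⇑opTₗ = opT := funext opTₗ_apply
  intro n
  have hexp := iterate_eq_sum_choose_nsmul_lucas (Polynomial.X : Ks) L opTₗ
    (by rw [hT, h0, h1])
    (by rw [hT, h2, h1, h0, ← pow_one Polynomial.X, ← hsA, two_nsmul]; ring)
    (fun n ↦ by rw [hT, hrec, ← pow_one Polynomial.X, ← hsA]; ring) n
  rw [hT, h0] at hexp
  rw [hexp]
  refine sum_congr rfl fun k _ ↦ ?_
  rw [nsmul_eq_mul, mul_assoc, hsA]

end
end

section
/- The q-Hermite polynomials expand in q-Fibonacci polynomials: H_n(x, (q−1)s | q) = Σ_{k=0}^{⌊(n+1)/2⌋} (C(n,k) − C(n,k−1))·s^k·F_{n+1−2k}(x,−s), where F_m(x,−s) = f_m(x − (q−1)s·D_q, −s)·1. -/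
open Polynomial

noncomputable section

lemma qDeriv_zero : qDeriv 0 = 0 := by simp [qDeriv]

lemma qDeriv_C_mul (a : Ks) (p : Ax) :
    qDeriv (Polynomial.C a * p) = Polynomial.C a * qDeriv p := by
  unfold qDeriv
  rw [← Polynomial.smul_eq_C_mul]
  erw [Polynomial.sum_smul_index p a _ (by intro i; simp)]
  simp only [map_mul]
  rw [Polynomial.sum_def, Polynomial.sum_def, Finset.mul_sum]
  exact Finset.sum_congr rfl fun i _ => by ring

lemma opT_zero : opT 0 = 0 := by simp [opT, qDeriv_zero]

lemma opT_add (p r : Ax) : opT (p + r) = opT p + opT r := by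
  simp only [opT, qDeriv_add]; ring

lemma opT_C_mul (a : Ks) (p : Ax) :
    opT (Polynomial.C a * p) = Polynomial.C a * opT p := by
  simp only [opT, qDeriv_C_mul]; ring

lemma opT_sum {ι : Type*} (s : Finset ι) (f : ι → Ax) :
    opT (∑ i ∈ s, f i) = ∑ i ∈ s, opT (f i) := by
  induction s using Finset.cons_induction with
  | empty => simp [opT_zero]
  | cons a s h ih => simp [Finset.sum_cons, opT_add, ih]

def cK (n k : ℕ) : Kq :=
  (n.choose k : Kq) - if k = 0 then 0 else (n.choose (k - 1) : Kq)

lemma cK_pascal (n k : ℕ) : cK (n + 1) (k + 1) = cK n (k + 1) + cK n k := by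
  unfold cK
  rcases k with _ | j
  · simp [Nat.choose_succ_succ']
  · simp only [Nat.succ_ne_zero, if_false, Nat.add_sub_cancel]
    rw [Nat.choose_succ_succ' n (j + 1), Nat.choose_succ_succ' n j]
    push_cast
    ring

lemma cK_big (n k : ℕ) (h : n + 1 < k) : cK n k = 0 := by
  unfold cK
  rcases k with _ | j
  · omega
  · simp [Nat.choose_eq_zero_of_lt (by omega : n < j + 1),
      Nat.choose_eq_zero_of_lt (by omega : n < j)]

lemma cK_mid (k : ℕ) (hk : 1 ≤ k) : cK (2 * k - 1) k = 0 := by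
  unfold cK
  have h : (2 * k - 1).choose ((2 * k - 1) - k) = (2 * k - 1).choose k :=
    Nat.choose_symm (by omega)
  have h2 : 2 * k - 1 - k = k - 1 := by omega
  rw [h2] at h
  simp [if_neg (by omega : k ≠ 0), h]

lemma opT_F_step (F : ℕ → Ax)
    (hrec : ∀ n : ℕ, F (n + 2) = opT (F (n + 1)) + (-sA) * F n) (m : ℕ) :
    opT (F (m + 1)) = F (m + 2) + sA * F m := by
  linear_combination - hrec m

lemma perk (F : ℕ → Ax) (h0 : F 0 = 0)
    (hrec : ∀ n : ℕ, F (n + 2) = opT (F (n + 1)) + (-sA) * F n) (n k : ℕ) :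
    opT (Polynomial.C (Polynomial.C (cK n k) * Polynomial.X ^ k) * F (n + 1 - 2 * k)) =
      Polynomial.C (Polynomial.C (cK n k) * Polynomial.X ^ k) * F (n + 2 - 2 * k) +
      Polynomial.C (Polynomial.C (cK n k) * Polynomial.X ^ (k + 1)) * F (n - 2 * k) := by
  rw [opT_C_mul]
  rcases le_or_gt (2 * k) n with h | h
  · obtain ⟨m, rfl⟩ : ∃ m, n = m + 2 * k := ⟨n - 2 * k, by omega⟩
    rw [show m + 2 * k + 1 - 2 * k = m + 1 by omega,
      show m + 2 * k + 2 - 2 * k = m + 2 by omega,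
      show m + 2 * k - 2 * k = m by omega,
      opT_F_step F hrec m]
    simp only [pow_succ, sA, map_mul, ← mul_assoc]
    ring
  · by_cases h2 : 2 * k = n + 1
    · have hc : cK n k = 0 := by
        have := cK_mid k (by omega)
        rwa [show 2 * k - 1 = n by omega] at this
      simp [hc]
    · rw [show n + 1 - 2 * k = 0 by omega, show n + 2 - 2 * k = 0 by omega,
        show n - 2 * k = 0 by omega, h0]
      simp [opT_zero]

lemma main_expansion (F : ℕ → Ax) (h0 : F 0 = 0) (h1 : F 1 = 1)
    (hrec : ∀ n : ℕ, F (n + 2) = opT (F (n + 1)) + (-sA) * F n) :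
    ∀ n : ℕ, opT^[n] 1 = ∑ k ∈ Finset.range (n + 2),
      Polynomial.C (Polynomial.C (cK n k) * Polynomial.X ^ k) * F (n + 1 - 2 * k) := by
  intro n
  induction n with
  | zero => simp [Finset.sum_range_succ, cK, h0, h1]
  | succ n ih =>
    rw [Function.iterate_succ_apply', ih, opT_sum]
    calc
      (∑ k ∈ Finset.range (n + 2),
          opT (Polynomial.C (Polynomial.C (cK n k) * Polynomial.X ^ k) * F (n + 1 - 2 * k)))
        = ∑ k ∈ Finset.range (n + 2),
            (Polynomial.C (Polynomial.C (cK n k) * Polynomial.X ^ k) * F (n + 2 - 2 * k) +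
             Polynomial.C (Polynomial.C (cK n k) * Polynomial.X ^ (k + 1)) * F (n - 2 * k)) :=
          Finset.sum_congr rfl fun k _ => perk F h0 hrec n k
      _ = (∑ k ∈ Finset.range (n + 2),
            Polynomial.C (Polynomial.C (cK n k) * Polynomial.X ^ k) * F (n + 2 - 2 * k)) +
          ∑ k ∈ Finset.range (n + 2),
            Polynomial.C (Polynomial.C (cK n k) * Polynomial.X ^ (k + 1)) * F (n - 2 * k) :=
          Finset.sum_add_distrib
      _ = ((∑ k ∈ Finset.range (n + 1),
            Polynomial.C (Polynomial.C (cK n (k + 1)) * Polynomial.X ^ (k + 1)) *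
              F (n + 2 - 2 * (k + 1))) +
            Polynomial.C (Polynomial.C (cK n 0) * Polynomial.X ^ 0) * F (n + 2 - 2 * 0)) +
          ∑ k ∈ Finset.range (n + 2),
            Polynomial.C (Polynomial.C (cK n k) * Polynomial.X ^ (k + 1)) * F (n - 2 * k) := by
          rw [Finset.sum_range_succ'
            (fun k => Polynomial.C (Polynomial.C (cK n k) * Polynomial.X ^ k) * F (n + 2 - 2 * k))
            (n + 1)]
      _ = ((∑ k ∈ Finset.range (n + 2),
            Polynomial.C (Polynomial.C (cK n (k + 1)) * Polynomial.X ^ (k + 1)) *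
              F (n + 2 - 2 * (k + 1))) +
            Polynomial.C (Polynomial.C (cK n 0) * Polynomial.X ^ 0) * F (n + 2 - 2 * 0)) +
          ∑ k ∈ Finset.range (n + 2),
            Polynomial.C (Polynomial.C (cK n k) * Polynomial.X ^ (k + 1)) * F (n - 2 * k) := by
          rw [Finset.sum_range_succ
            (fun k => Polynomial.C (Polynomial.C (cK n (k + 1)) * Polynomial.X ^ (k + 1)) *
              F (n + 2 - 2 * (k + 1))) (n + 1)]
          rw [cK_big n (n + 2) (by omega)]
          simp
      _ = (∑ k ∈ Finset.range (n + 2),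
            (Polynomial.C (Polynomial.C (cK n (k + 1)) * Polynomial.X ^ (k + 1)) *
              F (n + 2 - 2 * (k + 1)) +
             Polynomial.C (Polynomial.C (cK n k) * Polynomial.X ^ (k + 1)) * F (n - 2 * k))) +
          Polynomial.C (Polynomial.C (cK n 0) * Polynomial.X ^ 0) * F (n + 2 - 2 * 0) := by
          rw [Finset.sum_add_distrib]; ring
      _ = (∑ k ∈ Finset.range (n + 2),
            Polynomial.C (Polynomial.C (cK (n + 1) (k + 1)) * Polynomial.X ^ (k + 1)) *
              F (n + 1 + 1 - 2 * (k + 1))) +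
          Polynomial.C (Polynomial.C (cK (n + 1) 0) * Polynomial.X ^ 0) *
            F (n + 1 + 1 - 2 * 0) := by
          congr 1
          · refine Finset.sum_congr rfl fun k _ => ?_
            rw [show n + 2 - 2 * (k + 1) = n - 2 * k by omega, cK_pascal]
            simp only [map_add, add_mul]
          · rw [show cK n 0 = cK (n + 1) 0 by simp [cK],
              show n + 2 - 2 * 0 = n + 1 + 1 - 2 * 0 by omega]
      _ = ∑ k ∈ Finset.range (n + 1 + 2),
            Polynomial.C (Polynomial.C (cK (n + 1) k) * Polynomial.X ^ k) *
              F (n + 1 + 1 - 2 * k) :=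
          (Finset.sum_range_succ'
            (fun k => Polynomial.C (Polynomial.C (cK (n + 1) k) * Polynomial.X ^ k) *
              F (n + 1 + 1 - 2 * k)) (n + 2)).symm

/-- the q-Hermite polynomials expand in q-Fibonacci polynomials:
`H_n(x,(q−1)s|q) = Σ_{2k≤n+1} (C(n,k) − C(n,k−1))·s^k·F_{n+1−2k}(x,−s)`, where
`H_n(x,(q−1)s|q) = (x − (q−1)s·D_q)^n·1` and `F_m(x,−s)` substitutes
`t = (x·) − (q−1)s·D_q`, `u = −s` into the Fibonacci polynomial `f_m`
(`f_0 = 0`, `f_1 = 1`, `f_m = t·f_{m−1} + u·f_{m−2}`), applied to `1`;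
`C(n,−1) = 0` (the `if` guard). -/
theorem qHermite_qFibonacci_expansion (F : ℕ → Ax)
    (h0 : F 0 = 0)
    (h1 : F 1 = 1)
    (hrec : ∀ n : ℕ, F (n + 2) = opT (F (n + 1)) + (-sA) * F n) :
    ∀ n : ℕ,
      (fun p : Ax => opT p)^[n] 1 =
        ∑ k ∈ Finset.range ((n + 1) / 2 + 1),
          Polynomial.C (Polynomial.C ((n.choose k : Kq) -
              if k = 0 then 0 else (n.choose (k - 1) : Kq)) * Polynomial.X ^ k) *
            F (n + 1 - 2 * k) := by
  intro n
  have hmain := main_expansion F h0 h1 hrec n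
  have hfun : (fun p : Ax => opT p) = opT := rfl
  rw [hfun, hmain]
  refine (Finset.sum_subset (Finset.range_subset_range.mpr (by omega)) fun k hk hk' => ?_).symm
  rw [show n + 1 - 2 * k = 0 by
      simp only [Finset.mem_range] at hk hk'; omega, h0, mul_zero]

end
end

section
/- Touchard–Riordan formula: c(2n, 0, q) = (1/(1−q)^n)·Σ_{j=−n}^{n} C(2n, n+j)·(−1)^j·q^{C(j,2)}, where c(n,k,q) is defined by the recurrence c(0,k,q) = δ_{k,0}, c(n,0,q) = c(n−1,1,q), c(n,k,q) = c(n−1,k−1,q) + [k+1]_q·c(n−1,k+1,q) for k ≥ 1. -/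
/-!
With `n = k + 2m`, the scaled counts `T(m, k) = (1 - q)^m c(k + 2m, k)` have the closed form
`T(m, k) = ∑_{i + j = m} (-1)^i q^C(i+1,2) [k+i choose i]_q (C(n, j) - C(n, j - 1))`.
It is verified against the recurrence, which for `T` reads
`T(m+1, k+1) = T(m+1, k) + (1 - q^(k+2)) T(m, k+2)` and `T(m+1, 0) = (1 - q) T(m, 1)`:
Pascal's rule splits each ballot number `C(n, j) - C(n, j - 1)`, and the q-Pascal rule together
with `(1 - q^(i+k+1)) [k+i choose i]_q = (1 - q^(k+1)) [k+i+1 choose i]_q` recombines the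
coefficients. For `k = 0` the Gaussian binomials are `1`, and the Touchard–Riordan sum is this
expansion: its terms `j = -t` and `j = t + 1` carry the same power `q^C(t+1,2)` with opposite
signs and combine into `(-1)^t q^C(t+1,2) (C(2n, n-t) - C(2n, n-t-1))`.
-/

noncomputable section

open Finset

section Recurrence

variable {R : Type*} [CommSemiring R] {c : ℕ → ℕ → R} {w : ℕ → R}

theorem eq_zero_of_lt_of_recurrence (h0 : ∀ k, c 0 k = if k = 0 then 1 else 0)
    (hrec : ∀ n k, c (n + 1) (k + 1) = c n k + w k * c n (k + 2)) :
    ∀ {n k : ℕ}, n < k → c n k = 0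
  | 0, _, hk => by rw [h0, if_neg hk.ne']
  | n + 1, k + 1, hk => by
    rw [hrec, eq_zero_of_lt_of_recurrence h0 hrec (by omega),
      eq_zero_of_lt_of_recurrence h0 hrec (by omega), mul_zero, add_zero]

theorem diag_eq_one_of_recurrence (h0 : ∀ k, c 0 k = if k = 0 then 1 else 0)
    (hrec : ∀ n k, c (n + 1) (k + 1) = c n k + w k * c n (k + 2)) (n : ℕ) : c n n = 1 := by
  induction n with
  | zero => rw [h0, if_pos rfl]
  | succ n ih => rw [hrec, ih, eq_zero_of_lt_of_recurrence h0 hrec (by omega), mul_zero, add_zero]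

end Recurrence

lemma sum_Icc_neg_natCast {M : Type*} [AddCommMonoid M] (F : ℤ → M) (n : ℕ) :
    ∑ j ∈ Icc (-(n : ℤ)) n, F j = ∑ t ∈ range (n + 1), F (-t) + ∑ t ∈ range n, F (t + 1) := by
  induction n with
  | zero => simp
  | succ n ih =>
    have hIcc : Icc (-((n + 1 : ℕ) : ℤ)) (n + 1 : ℕ)
        = insert (-((n + 1 : ℕ) : ℤ)) (insert ((n : ℤ) + 1) (Icc (-(n : ℤ)) n)) := by
      ext j; simp only [mem_insert, mem_Icc]; omega
    rw [hIcc, sum_insert (by simp; omega), sum_insert (by simp), ih,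
      sum_range_succ (fun t : ℕ => F (-t)) (n + 1), sum_range_succ (fun t : ℕ => F (t + 1)) n]
    push_cast
    abel

lemma toNat_mul_sub_one_div_two {j : ℤ} {t : ℕ} (h : j * (j - 1) = t * (t + 1)) :
    (j * (j - 1) / 2).toNat = (t + 1).choose 2 := by
  rw [h, Nat.choose_two_right, Nat.add_sub_cancel, mul_comm (t + 1),
    show (t : ℤ) * (t + 1) = ((t * (t + 1) : ℕ) : ℤ) by push_cast; ring]
  omega

section GaussianBinomial

variable {K : Type*} [Field K] (x : K)

lemma one_sub_pow_succ_ne_zero {x : K} (hx : ¬IsOfFinOrder x) (n : ℕ) : 1 - x ^ (n + 1) ≠ 0 :=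
  fun h => hx (isOfFinOrder_iff_pow_eq_one.mpr ⟨n + 1, n.succ_pos, (sub_eq_zero.mp h).symm⟩)

/-- `gaussianBinomial x i k` is the Gaussian binomial coefficient `[i + k choose i]_x`; the
product formula is the right one as soon as `x` is not a root of unity. -/
def gaussianBinomial (i k : ℕ) : K := ∏ l ∈ range i, (1 - x ^ (k + l + 1)) / (1 - x ^ (l + 1))

@[simp]
lemma gaussianBinomial_zero_left (k : ℕ) : gaussianBinomial x 0 k = 1 := prod_range_zero _

lemma gaussianBinomial_succ_left (i k : ℕ) :
    gaussianBinomial x (i + 1) k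
      = gaussianBinomial x i k * ((1 - x ^ (k + i + 1)) / (1 - x ^ (i + 1))) :=
  prod_range_succ _ _

lemma gaussianBinomial_zero_right {x : K} (hx : ¬IsOfFinOrder x) (i : ℕ) :
    gaussianBinomial x i 0 = 1 :=
  prod_eq_one fun l _ => by rw [zero_add, div_self (one_sub_pow_succ_ne_zero hx l)]

lemma one_sub_pow_mul_gaussianBinomial (i k : ℕ) :
    (1 - x ^ (i + k + 1)) * gaussianBinomial x i k
      = (1 - x ^ (k + 1)) * gaussianBinomial x i (k + 1) := by
  induction i with
  | zero => simp
  | succ i ih =>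
    rw [gaussianBinomial_succ_left, gaussianBinomial_succ_left]
    linear_combination (1 - x ^ (i + 1 + k + 1)) / (1 - x ^ (i + 1)) * ih

lemma gaussianBinomial_succ_succ {x : K} (hx : ¬IsOfFinOrder x) (i k : ℕ) :
    gaussianBinomial x (i + 1) (k + 1)
      = gaussianBinomial x (i + 1) k + x ^ (k + 1) * gaussianBinomial x i (k + 1) := by
  have hi := one_sub_pow_succ_ne_zero hx i
  rw [gaussianBinomial_succ_left, gaussianBinomial_succ_left]
  field_simp
  linear_combination -(one_sub_pow_mul_gaussianBinomial x i k)

end GaussianBinomial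

def ballot (n : ℕ) : ℕ → ℤ
  | 0 => 1
  | j + 1 => n.choose (j + 1) - n.choose j

@[simp]
lemma ballot_zero (n : ℕ) : ballot n 0 = 1 := rfl

lemma ballot_succ (n j : ℕ) : ballot n (j + 1) = n.choose (j + 1) - n.choose j := rfl

lemma ballot_succ_succ (n j : ℕ) : ballot (n + 1) (j + 1) = ballot n (j + 1) + ballot n j := by
  rcases j with _ | j <;> simp only [ballot, Nat.choose_succ_succ, Nat.choose_zero_right] <;>
    push_cast <;> ring

lemma ballot_two_mul_add_one (m : ℕ) : ballot (2 * m + 1) (m + 1) = 0 := by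
  simp [ballot, Nat.choose_symm_half]

lemma sum_Icc_choose_mul_neg_one_zpow {K : Type*} [Field K] (x : K) (n : ℕ) :
    ∑ j ∈ Icc (-(n : ℤ)) n,
        ((2 * n).choose ((n : ℤ) + j).toNat : K) * (-1) ^ j * x ^ ((j * (j - 1) / 2).toNat)
      = ∑ p ∈ antidiagonal n, (-1) ^ p.1 * x ^ ((p.1 + 1).choose 2) * (ballot (2 * n) p.2 : K) := by
  set F : ℤ → K := fun j =>
    ((2 * n).choose ((n : ℤ) + j).toNat : K) * (-1) ^ j * x ^ ((j * (j - 1) / 2).toNat) with hF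
  have hneg (t : ℕ) : F (-t) = (2 * n).choose (n - t) * ((-1) ^ t * x ^ ((t + 1).choose 2)) := by
    simp only [hF]
    rw [show ((n : ℤ) + -t).toNat = n - t by omega, zpow_neg, zpow_natCast, ← inv_pow,
      inv_neg, inv_one, toNat_mul_sub_one_div_two (t := t) (by ring)]
    ring
  have hpair : ∀ t ∈ range n,
      (-1) ^ t * x ^ ((t + 1).choose 2) * (ballot (2 * n) (n - t) : K) = F (-t) + F (t + 1) := by
    intro t ht
    obtain ⟨s, hs⟩ : ∃ s, n - t = s + 1 := ⟨n - t - 1, by have := mem_range.mp ht; omega⟩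
    rw [hneg, hs, ballot_succ]
    simp only [hF]
    rw [show ((n : ℤ) + (t + 1)).toNat = n + t + 1 by omega,
      Nat.choose_symm_of_eq_add (show 2 * n = n + t + 1 + s by omega),
      toNat_mul_sub_one_div_two (t := t) (by ring), zpow_add_one₀ (by norm_num), zpow_natCast]
    push_cast
    ring
  rw [sum_Icc_neg_natCast F, Nat.sum_antidiagonal_eq_sum_range_succ
      (fun i j => (-1 : K) ^ i * x ^ ((i + 1).choose 2) * (ballot (2 * n) j : K)),
    sum_range_succ, sum_range_succ, sum_congr rfl hpair, sum_add_distrib, hneg, Nat.sub_self,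
    Nat.choose_zero_right, ballot_zero]
  push_cast
  ring

section TouchardSum

variable {K : Type*} [Field K] {x : K}

lemma sum_antidiagonal_mul_ballot_succ (f : ℕ → K) (n m : ℕ) :
    ∑ p ∈ antidiagonal (m + 1), f p.1 * ballot (n + 1) p.2
      = f 0 * ballot n (m + 1) + ∑ p ∈ antidiagonal m, (f (p.1 + 1) + f p.1) * ballot n p.2 := by
  have peel := (Nat.sum_antidiagonal_succ (n := m) (f := fun p => f p.1 * (ballot n p.2 : K))).symm
    |>.trans (Nat.sum_antidiagonal_succ' (n := m) (f := fun p => f p.1 * (ballot n p.2 : K)))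
  rw [Nat.sum_antidiagonal_succ']
  simp only [ballot_succ_succ, ballot_zero, Int.cast_add, mul_add, add_mul, sum_add_distrib]
    at peel ⊢
  linear_combination -peel

variable (x) in
def touchardCoeff (k i : ℕ) : K := (-1) ^ i * x ^ ((i + 1).choose 2) * gaussianBinomial x i k

variable (x) in
def touchardSum (m k : ℕ) : K :=
  ∑ p ∈ antidiagonal m, touchardCoeff x k p.1 * ballot (k + 2 * m) p.2

@[simp]
lemma touchardCoeff_zero (k : ℕ) : touchardCoeff x k 0 = 1 := by simp [touchardCoeff]

lemma touchardCoeff_succ (k i : ℕ) :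
    touchardCoeff x k (i + 1)
      = -x ^ (i + 1) * ((-1) ^ i * x ^ ((i + 1).choose 2)) * gaussianBinomial x (i + 1) k := by
  rw [touchardCoeff, Nat.choose_succ_succ (i + 1), Nat.choose_one_right]
  ring

lemma touchardCoeff_zero_succ_add (hx : ¬IsOfFinOrder x) (i : ℕ) :
    touchardCoeff x 0 (i + 1) + touchardCoeff x 0 i = (1 - x) * touchardCoeff x 1 i := by
  have h := one_sub_pow_mul_gaussianBinomial x i 0
  rw [gaussianBinomial_zero_right hx] at h
  rw [touchardCoeff_succ, touchardCoeff, touchardCoeff, gaussianBinomial_zero_right hx,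
    gaussianBinomial_zero_right hx]
  linear_combination (-1) ^ i * x ^ ((i + 1).choose 2) * h

lemma touchardCoeff_succ_add (hx : ¬IsOfFinOrder x) (k i : ℕ) :
    touchardCoeff x (k + 1) (i + 1) + touchardCoeff x (k + 1) i
      = touchardCoeff x k (i + 1) + (1 - x ^ (k + 2)) * touchardCoeff x (k + 2) i := by
  rw [touchardCoeff_succ, touchardCoeff_succ, touchardCoeff, touchardCoeff,
    gaussianBinomial_succ_succ hx]
  linear_combination
    (-1) ^ i * x ^ ((i + 1).choose 2) * one_sub_pow_mul_gaussianBinomial x i (k + 1)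

lemma touchardSum_zero_right (hx : ¬IsOfFinOrder x) (m : ℕ) :
    touchardSum x m 0
      = ∑ p ∈ antidiagonal m, (-1) ^ p.1 * x ^ ((p.1 + 1).choose 2) * (ballot (2 * m) p.2 : K) := by
  simp [touchardSum, touchardCoeff, gaussianBinomial_zero_right hx]

lemma touchardSum_zero_left (k : ℕ) : touchardSum x 0 k = 1 := by
  simp [touchardSum]

lemma touchardSum_succ_zero (hx : ¬IsOfFinOrder x) (m : ℕ) :
    touchardSum x (m + 1) 0 = (1 - x) * touchardSum x m 1 := by
  rw [touchardSum, touchardSum, show 0 + 2 * (m + 1) = 2 * m + 1 + 1 by ring,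
    sum_antidiagonal_mul_ballot_succ, ballot_two_mul_add_one, show 1 + 2 * m = 2 * m + 1 by ring,
    mul_sum]
  simp only [touchardCoeff_zero_succ_add hx, Int.cast_zero, mul_zero, zero_add, mul_assoc]

lemma touchardSum_succ_succ (hx : ¬IsOfFinOrder x) (m k : ℕ) :
    touchardSum x (m + 1) (k + 1)
      = touchardSum x (m + 1) k + (1 - x ^ (k + 2)) * touchardSum x m (k + 2) := by
  rw [touchardSum, touchardSum, touchardSum, show k + 1 + 2 * (m + 1) = k + 2 * (m + 1) + 1 by ring,
    sum_antidiagonal_mul_ballot_succ, Nat.sum_antidiagonal_succ,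
    show k + 2 + 2 * m = k + 2 * (m + 1) by ring, mul_sum, add_assoc, ← sum_add_distrib]
  simp only [touchardCoeff_zero]
  congr 1
  refine sum_congr rfl fun p _ => ?_
  rw [touchardCoeff_succ_add hx]
  ring

theorem one_sub_pow_mul_eq_touchardSum (hx : ¬IsOfFinOrder x) {c : ℕ → ℕ → K}
    (h0 : ∀ k, c 0 k = if k = 0 then 1 else 0) (hz : ∀ n, c (n + 1) 0 = c n 1)
    (hrec : ∀ n k, c (n + 1) (k + 1) = c n k + (∑ i ∈ range (k + 2), x ^ i) * c n (k + 2))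
    (m k : ℕ) : (1 - x) ^ m * c (k + 2 * m) k = touchardSum x m k := by
  induction m generalizing k with
  | zero => rw [touchardSum_zero_left, pow_zero, one_mul, mul_zero, add_zero,
      diag_eq_one_of_recurrence h0 hrec]
  | succ m ih =>
    induction k with
    | zero =>
      calc (1 - x) ^ (m + 1) * c (0 + 2 * (m + 1)) 0
          = (1 - x) * ((1 - x) ^ m * c (1 + 2 * m) 1) := by
            rw [show 0 + 2 * (m + 1) = 1 + 2 * m + 1 by ring, hz]; ring
        _ = touchardSum x (m + 1) 0 := by rw [ih, touchardSum_succ_zero hx]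
    | succ k ihk =>
      calc (1 - x) ^ (m + 1) * c (k + 1 + 2 * (m + 1)) (k + 1)
          = (1 - x) ^ (m + 1) * c (k + 2 * (m + 1)) k
              + (1 - x ^ (k + 2)) * ((1 - x) ^ m * c (k + 2 + 2 * m) (k + 2)) := by
            rw [show k + 1 + 2 * (m + 1) = k + 2 * (m + 1) + 1 by ring, hrec,
              show k + 2 + 2 * m = k + 2 * (m + 1) by ring, ← mul_neg_geom_sum]
            ring
        _ = touchardSum x (m + 1) (k + 1) := by rw [ihk, ih, touchardSum_succ_succ hx]

end TouchardSum

lemma not_isOfFinOrder_q : ¬IsOfFinOrder q := fun h => by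
  obtain ⟨n, hn, hqn⟩ := isOfFinOrder_iff_pow_eq_one.mp h
  refine RatFunc.transcendental_X (K := ℚ) ⟨Polynomial.X ^ n - 1, ?_, ?_⟩
  · exact Polynomial.X_pow_sub_C_ne_zero hn 1
  · simpa [sub_eq_zero, q] using hqn

lemma one_sub_q_ne_zero : 1 - q ≠ 0 := by
  simpa using one_sub_pow_succ_ne_zero not_isOfFinOrder_q 0

/-- Touchard–Riordan formula:
`c(2n,0,q) = (1/(1−q)^n) · Σ_{j=−n}^{n} C(2n,n+j)·(−1)^j·q^{j(j−1)/2}`,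
where `c(0,k,q) = δ_{k,0}`, `c(n,0,q) = c(n−1,1,q)` and
`c(n,k,q) = c(n−1,k−1,q) + [k+1]_q·c(n−1,k+1,q)` for `k ≥ 1`. -/
theorem touchard_riordan (c : ℕ → ℕ → Kq)
    (h0 : ∀ k, c 0 k = if k = 0 then 1 else 0)
    (hz : ∀ n, c (n + 1) 0 = c n 1)
    (hrec : ∀ n k, c (n + 1) (k + 1) = c n k + qInt (k + 2) * c n (k + 2)) :
    ∀ n : ℕ,
      c (2 * n) 0 =
        (1 / (1 - q) ^ n) *
          ∑ j ∈ Finset.Icc (-(n : ℤ)) (n : ℤ),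
            ((2 * n).choose ((n : ℤ) + j).toNat : Kq) * (-1) ^ j *
              q ^ ((j * (j - 1) / 2).toNat) := by
  intro n
  have closed_form := one_sub_pow_mul_eq_touchardSum not_isOfFinOrder_q h0 hz hrec n 0
  rw [zero_add, touchardSum_zero_right not_isOfFinOrder_q] at closed_form
  rw [sum_Icc_choose_mul_neg_one_zpow, ← closed_form]
  field_simp [pow_ne_zero n one_sub_q_ne_zero]

end
end
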